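/- arXiv:1208.0804 — 6 statements merged into one kernel-verified Lean document; each statement's English description precedes it below -/
import Mathlib

section
/- Let R>0, η>0 be reals, let Ψ, Y : ℝ×ℝ → ℝ be functions of (r,R) with Ψ twice differentiable in R and once in r, Y differentiable in R, and let Q : ℝ → ℝ be differentiable. At a point (r,R) with R>0, Y(r,R)≠0, ∂Ψ/∂r(r,R)≠0 and ∂Ψ₁/∂r(r,R)≠0, define the off-shell fields ε(r,R,η) = η·(∂Ψ/∂r)/(4πR²Y) + (∂Ψ/∂R)/(4πR²), p_r(r,R) = −(∂Ψ/∂R)/(4πR²), p_t(r,R,η) = −(η/(8πR))·∂/∂R[(∂Ψ/∂r)/Y] − (∂²Ψ/∂R²)/(8πR), and let ε₁, p_{r1}, p_{t1} be given by the same formulas with Ψ replaced by Ψ₁(r,R) := Ψ(r,R) − Q(r)²/(2R) and Y replaced by Y₁(r,R) := ((∂Ψ₁/∂r)/(∂Ψ/∂r))·Y(r,R). Then ε₁ = ε + Q(r)²/(8πR⁴), p_{r1} = p_r − Q(r)²/(8πR⁴), and p_{t1} = p_t + Q(r)²/(8πR⁴). -/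
/-- Energy density (off-shell), as a function of the mass function `Ψ`,
the function `Y`, at the point `(r, R)` with internal variable `η`. -/
noncomputable def epsF (Ψ Y : ℝ → ℝ → ℝ) (r R η : ℝ) : ℝ :=
  η * (deriv (fun s => Ψ s R) r) / (4 * Real.pi * R ^ 2 * Y r R)
    + (deriv (fun ρ => Ψ r ρ) R) / (4 * Real.pi * R ^ 2)

/-- Radial pressure (off-shell). -/
noncomputable def prF (Ψ : ℝ → ℝ → ℝ) (r R : ℝ) : ℝ :=
  - (deriv (fun ρ => Ψ r ρ) R) / (4 * Real.pi * R ^ 2)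

/-- Tangential pressure (off-shell). -/
noncomputable def ptF (Ψ Y : ℝ → ℝ → ℝ) (r R η : ℝ) : ℝ :=
  - (η / (8 * Real.pi * R)) * (deriv (fun ρ => (deriv (fun s => Ψ s ρ) r) / Y r ρ) R)
    - (deriv (fun ρ => deriv (fun σ => Ψ r σ) ρ) R) / (8 * Real.pi * R)

/-- The charged mass function `Ψ₁ = Ψ - Q²/(2R)`. -/
noncomputable def Psi1 (Ψ : ℝ → ℝ → ℝ) (Q : ℝ → ℝ) : ℝ → ℝ → ℝ :=
  fun s ρ => Ψ s ρ - Q s ^ 2 / (2 * ρ)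

/-- The charged function `Y₁ = ((∂Ψ₁/∂r)/(∂Ψ/∂r))·Y`. -/
noncomputable def Y1F (Ψ Y : ℝ → ℝ → ℝ) (Q : ℝ → ℝ) : ℝ → ℝ → ℝ :=
  fun s ρ => (deriv (fun t => Psi1 Ψ Q t ρ) s / deriv (fun t => Ψ t ρ) s) * Y s ρ

/-!
Since `Ψ₁ = Ψ - Q²/(2R)`, one has `∂_R Ψ₁ = ∂_R Ψ + Q²/(2R²)` and `∂²_R Ψ₁ = ∂²_R Ψ - Q²/R³`,
which produce the shifts of `p_r`, `ε` and `p_t` through their `∂_R Ψ` terms. The `η`-terms do not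
change because `Y₁` is chosen so that `(∂_r Ψ₁)/Y₁ = (∂_r Ψ)/Y`.
-/

open Filter Topology

theorem div_div_mul_cancel_left {K : Type*} [Field K] {a : K} (b c : K) (ha : a ≠ 0) :
    a / (a / b * c) = b / c := by
  rw [← div_div, div_div_cancel₀ ha]

theorem ContinuousAt.eq_of_frequently_eq {X Y : Type*} [TopologicalSpace X] [TopologicalSpace Y]
    [T2Space Y] {f g : X → Y} {x : X} (hf : ContinuousAt f x) (hg : ContinuousAt g x)
    (h : ∃ᶠ y in 𝓝 x, f y = g y) : f x = g x :=
  ((hf.tendsto.prodMk_nhds hg.tendsto).frequently (p := fun q => q ∈ {q : Y × Y | q.1 = q.2}) h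
    ).mem_of_closed isClosed_diagonal

section
variable {𝕜 F : Type*} [NontriviallyNormedField 𝕜] [NormedAddCommGroup F] [NormedSpace 𝕜 F]

theorem deriv_eq_zero_of_frequently_eq_zero {f : 𝕜 → F} {x : 𝕜}
    (h : ∃ᶠ y in 𝓝[≠] x, f y = 0) : deriv f x = 0 := by
  by_cases hd : DifferentiableAt 𝕜 f x
  · have hfx : f x = 0 :=
      hd.continuousAt.eq_of_frequently_eq continuousAt_const (h.filter_mono nhdsWithin_le_nhds)
    have hacc : AccPt x (𝓟 {y | f y = 0}) := accPt_iff_frequently_nhdsNE.2 h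
    exact hacc.uniqueDiffWithinAt.eq_deriv _ hd.hasDerivAt.hasDerivWithinAt
      ((hasDerivWithinAt_const _ _ _).congr (fun y hy => hy) hfx)
  · exact deriv_zero_of_not_differentiableAt hd

/-- The identity `f / ((f / g) * Y) = g / Y` fails where `f` vanishes. If such zeros accumulate at
`x`, both sides still have derivative `0` there: the left side vanishes on them, and the right side
equals the continuous function `(g - f) / Y` on them, but not at `x`, so it is not continuous. -/
theorem deriv_div_div_mul_eq {f g Y : 𝕜 → 𝕜} {x : 𝕜}
    (hgf : ContinuousAt (fun y => g y - f y) x) (hY : ContinuousAt Y x) (hYx : Y x ≠ 0)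
    (hfx : f x ≠ 0) :
    deriv (fun y => f y / (f y / g y * Y y)) x = deriv (fun y => g y / Y y) x := by
  by_cases hzero : ∃ᶠ y in 𝓝 x, f y = 0
  · have hG : ¬ DifferentiableAt 𝕜 (fun y => g y / Y y) x := fun hd => hfx <| by
      have := hd.continuousAt.eq_of_frequently_eq (g := fun y => (g y - f y) / Y y)
        (hgf.div hY hYx) (hzero.mono fun y hy => by simp [hy])
      rw [div_left_inj' hYx] at this
      exact sub_eq_self.1 this.symm
    rw [deriv_zero_of_not_differentiableAt hG]
    exact deriv_eq_zero_of_frequently_eq_zero <| frequently_nhdsWithin_iff.2 <|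
      hzero.mono fun y hy => ⟨by simp [hy], fun hxy => hfx (hxy ▸ hy)⟩
  · exact EventuallyEq.deriv_eq <|
      (not_frequently.1 hzero).mono fun y hy => div_div_mul_cancel_left _ _ hy

end

section
variable {Ψ : ℝ → ℝ → ℝ} {Q : ℝ → ℝ} {s : ℝ}

theorem deriv_Psi1_fst (ρ : ℝ) (hΨ : DifferentiableAt ℝ (fun t => Ψ t ρ) s)
    (hQ : DifferentiableAt ℝ Q s) :
    deriv (fun t => Psi1 Ψ Q t ρ) s = deriv (fun t => Ψ t ρ) s - Q s * deriv Q s / ρ :=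
  ((hΨ.hasDerivAt.fun_sub ((hQ.hasDerivAt.fun_pow 2).div_const (2 * ρ))).congr_deriv
    (by ring)).deriv

theorem hasDerivAt_Psi1_snd {ρ : ℝ} (hΨ : DifferentiableAt ℝ (fun σ => Ψ s σ) ρ) (hρ : ρ ≠ 0) :
    HasDerivAt (fun σ => Psi1 Ψ Q s σ) (deriv (fun σ => Ψ s σ) ρ + Q s ^ 2 / (2 * ρ ^ 2)) ρ := by
  have hq := (hasDerivAt_const ρ (Q s ^ 2)).fun_div ((hasDerivAt_id' ρ).const_mul 2)
    (by simpa using hρ)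
  exact (hΨ.hasDerivAt.fun_sub hq).congr_deriv (by field_simp; ring)

theorem deriv_deriv_Psi1_snd {R : ℝ} (hΨ : ∀ᶠ ρ in 𝓝 R, DifferentiableAt ℝ (fun σ => Ψ s σ) ρ)
    (hΨ' : DifferentiableAt ℝ (fun σ => deriv (fun τ => Ψ s τ) σ) R) (hR : R ≠ 0) :
    deriv (fun ρ => deriv (fun σ => Psi1 Ψ Q s σ) ρ) R
      = deriv (fun σ => deriv (fun τ => Ψ s τ) σ) R - Q s ^ 2 / R ^ 3 := by
  have heq : (fun ρ => deriv (fun σ => Psi1 Ψ Q s σ) ρ)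
      =ᶠ[𝓝 R] fun ρ => deriv (fun σ => Ψ s σ) ρ + Q s ^ 2 / (2 * ρ ^ 2) := by
    filter_upwards [hΨ, eventually_ne_nhds hR] with ρ hd hρ using (hasDerivAt_Psi1_snd hd hρ).deriv
  have hq := (hasDerivAt_const R (Q s ^ 2)).fun_div ((hasDerivAt_pow 2 R).const_mul 2)
    (by simpa using hR)
  rw [heq.deriv_eq, (hΨ'.hasDerivAt.fun_add hq).deriv]
  field_simp
  ring

end

theorem charged_stress_energy_general
    (Ψ Y : ℝ → ℝ → ℝ) (Q : ℝ → ℝ) (r R η : ℝ)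
    (hR : 0 < R)
    (hΨr : ∀ s ρ, DifferentiableAt ℝ (fun t => Ψ t ρ) s)
    (hΨR : ∀ s ρ, DifferentiableAt ℝ (fun σ => Ψ s σ) ρ)
    (hΨRR : ∀ s ρ, DifferentiableAt ℝ (fun σ => deriv (fun τ => Ψ s τ) σ) ρ)
    (hYd : ∀ s ρ, DifferentiableAt ℝ (fun σ => Y s σ) ρ)
    (hQd : Differentiable ℝ Q)
    (hYne : Y r R ≠ 0)
    (hΨ1rne : deriv (fun t => Psi1 Ψ Q t R) r ≠ 0) :
    epsF (Psi1 Ψ Q) (Y1F Ψ Y Q) r R η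
        = epsF Ψ Y r R η + Q r ^ 2 / (8 * Real.pi * R ^ 4) ∧
    prF (Psi1 Ψ Q) r R = prF Ψ r R - Q r ^ 2 / (8 * Real.pi * R ^ 4) ∧
    ptF (Psi1 Ψ Q) (Y1F Ψ Y Q) r R η
        = ptF Ψ Y r R η + Q r ^ 2 / (8 * Real.pi * R ^ 4) := by
  have hR0 : R ≠ 0 := hR.ne'
  have hPsi1_snd := (hasDerivAt_Psi1_snd (Q := Q) (hΨR r R) hR0).deriv
  refine ⟨?_, ?_, ?_⟩
  · simp only [epsF, Y1F, hPsi1_snd]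
    rw [mul_left_comm (4 * Real.pi * R ^ 2), mul_div_assoc, div_div_mul_cancel_left _ _ hΨ1rne]
    field_simp
    ring
  · simp only [prF, hPsi1_snd]
    field_simp
    ring
  · have hgf : ContinuousAt
        (fun ρ => deriv (fun t => Ψ t ρ) r - deriv (fun t => Psi1 Ψ Q t ρ) r) R := by
      simp only [deriv_Psi1_fst _ (hΨr r _) (hQd r), sub_sub_cancel]
      exact continuousAt_const.div continuousAt_id hR0
    simp only [ptF, Y1F]
    rw [deriv_div_div_mul_eq hgf (hYd r R).continuousAt hYne hΨ1rne,
      deriv_deriv_Psi1_snd (.of_forall (hΨR r)) (hΨRR r R) hR0]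
    field_simp
    ring

/-- Adding an electromagnetic charge `Q(r)` to the elastic spherical model `(Ψ, Y)`
shifts the diagonal stress-energy components by `±Q²/(8πR⁴)`. -/
theorem charged_stress_energy
    (Ψ Y : ℝ → ℝ → ℝ) (Q : ℝ → ℝ) (r R η : ℝ)
    (hR : 0 < R) (hη : 0 < η)
    (hΨr : ∀ s ρ, DifferentiableAt ℝ (fun t => Ψ t ρ) s)
    (hΨR : ∀ s ρ, DifferentiableAt ℝ (fun σ => Ψ s σ) ρ)
    (hΨRR : ∀ s ρ, DifferentiableAt ℝ (fun σ => deriv (fun τ => Ψ s τ) σ) ρ)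
    (hYd : ∀ s ρ, DifferentiableAt ℝ (fun σ => Y s σ) ρ)
    (hQd : Differentiable ℝ Q)
    (hYne : Y r R ≠ 0)
    (hΨrne : deriv (fun t => Ψ t R) r ≠ 0)
    (hΨ1rne : deriv (fun t => Psi1 Ψ Q t R) r ≠ 0) :
    epsF (Psi1 Ψ Q) (Y1F Ψ Y Q) r R η
        = epsF Ψ Y r R η + Q r ^ 2 / (8 * Real.pi * R ^ 4) ∧
    prF (Psi1 Ψ Q) r R = prF Ψ r R - Q r ^ 2 / (8 * Real.pi * R ^ 4) ∧
    ptF (Psi1 Ψ Q) (Y1F Ψ Y Q) r R η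
        = ptF Ψ Y r R η + Q r ^ 2 / (8 * Real.pi * R ^ 4) :=
  charged_stress_energy_general Ψ Y Q r R η hR hΨr hΨR hΨRR hYd hQd hYne hΨ1rne
end

section
/- Assume Ψ(r,R) = ψ₃₀r³ + ψ₂₁r²R + ψ₁₂rR² + ψ₀₃R³ + o((|r|+|R|)³) as (r,R)→(0,0) with ψ₃₀ > 0 and Ψ continuous, and Q(r) = q₀r^{2+p} + o(r^{2+p}) as r→0⁺ with q₀ ≠ 0 and real p > 1. Then there exist ε > 0 and functions R_{h1}, R_{h2} : (0,ε) → ℝ with 0 < R_{h1}(r) < R_{h2}(r) ≤ r, such that for i = 1,2 and all r ∈ (0,ε), R_{hi}(r)² − 2Ψ(r,R_{hi}(r))·R_{hi}(r) + Q(r)² = 0 (i.e. R_{hi}(r) = 2Ψ₁(r,R_{hi}(r)) where Ψ₁ = Ψ − Q²/(2R)), and moreover lim_{r→0⁺} R_{h1}(r)/r^{2p+1} = q₀²/(2ψ₃₀) and lim_{r→0⁺} R_{h2}(r)/r³ = 2ψ₃₀. -/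
/-!
Put `R = x r³`. Dividing the horizon equation by `r⁶` turns it into the quadratic
`x² - 2 u x + w r^(2p-2) = 0` with `u = Ψ(r, R)/r³` and `w = (Q(r)/r^(2+p))²`. Uniformly for
`0 ≤ R ≤ C r³` the cubic expansion gives `u → ψ₃₀`, while `w → q₀²` and, as `p > 1`,
`r^(2p-2) → 0`. The left side of the horizon equation is `Q(r)² > 0` at `R = 0`, negative at
`R = ψ₃₀ r³` and positive at `R = 4ψ₃₀ r³`, so the intermediate value theorem gives two roots.
On the small one `x(2u - x) = w r^(2p-2)` with `2u - x → 2ψ₃₀` forces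
`x / r^(2p-2) → q₀²/(2ψ₃₀)`; on the large one `x = 2u - w r^(2p-2)/x → 2ψ₃₀`.
-/

open Filter Topology Asymptotics Set

theorem tendsto_rpow_nhdsGT_zero_of_pos {y : ℝ} (hy : 0 < y) :
    Tendsto (fun r : ℝ => r ^ y) (𝓝[>] 0) (𝓝 0) := by
  simpa [Real.zero_rpow hy.ne'] using
    ((Real.continuous_rpow_const hy.le).tendsto 0).mono_left nhdsWithin_le_nhds

theorem eventually_mul_sq_lt (C : ℝ) {ε : ℝ} (hε : 0 < ε) :
    ∀ᶠ r in 𝓝[>] (0:ℝ), C * r ^ 2 < ε := by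
  refine Tendsto.eventually_lt_const (by simpa using hε) (?_ : Tendsto _ _ (𝓝 (C * 0)))
  simpa using (tendsto_rpow_nhdsGT_zero_of_pos two_pos).const_mul C

theorem sq_div_pow_six {p r : ℝ} (hr : 0 < r) (q : ℝ) :
    q ^ 2 / r ^ 6 = (q / r ^ (2+p)) ^ 2 * r ^ (2*p-2) := by
  have hpow : (r ^ (2+p)) ^ 2 = r ^ (2*p-2) * r ^ 6 := by
    rw [← Real.rpow_natCast, ← Real.rpow_mul hr.le, ← Real.rpow_natCast, ← Real.rpow_add hr]
    congr 1
    push_cast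
    ring
  have hrp : 0 < r ^ (2*p-2) := Real.rpow_pos_of_pos hr _
  rw [div_pow q, hpow]
  field_simp

theorem tendsto_div_of_isLittleO_sub {α : Type*} {l : Filter α} {f g : α → ℝ} {c : ℝ}
    (h : (fun x => f x - c * g x) =o[l] g) (hg : ∀ᶠ x in l, g x ≠ 0) :
    Tendsto (fun x => f x / g x) l (𝓝 c) := by
  refine (by simpa using h.tendsto_div_nhds_zero.add_const c :
    Tendsto (fun x => (f x - c * g x) / g x + c) l (𝓝 c)).congr' ?_
  filter_upwards [hg] with x hx
  field_simp
  ring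

theorem tendsto_sq_div_pow_six {Q : ℝ → ℝ} {q0 p : ℝ} (hp : 1 < p)
    (hQ : Tendsto (fun r => Q r / r ^ (2+p)) (𝓝[>] 0) (𝓝 q0)) :
    Tendsto (fun r => Q r ^ 2 / r ^ 6) (𝓝[>] 0) (𝓝 0) := by
  refine (by simpa using (hQ.pow 2).mul (tendsto_rpow_nhdsGT_zero_of_pos (by linarith)) :
    Tendsto (fun r => (Q r / r ^ (2+p)) ^ 2 * r ^ (2*p-2)) _ _).congr' ?_
  filter_upwards [self_mem_nhdsWithin] with r hr
  exact (sq_div_pow_six hr _).symm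

section QuadraticRoots

variable {α : Type*} {l : Filter α} {x u w t : α → ℝ} {a b : ℝ}

theorem tendsto_div_of_small_root (ha : 0 < a) (hu : Tendsto u l (𝓝 a))
    (hw : Tendsto w l (𝓝 b)) (ht : Tendsto t l (𝓝 0)) (ht0 : ∀ᶠ i in l, t i ≠ 0)
    (hxa : ∀ᶠ i in l, x i ≤ a) (hx : ∀ᶠ i in l, x i ^ 2 - 2 * u i * x i + w i * t i = 0) :
    Tendsto (fun i => x i / t i) l (𝓝 (b / (2 * a))) := by
  have hgap : ∀ᶠ i in l, a / 2 < 2 * u i - x i := by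
    filter_upwards [((hu.const_mul 2).sub_const a).eventually_const_lt
      (show a / 2 < 2 * a - a by linarith), hxa] with i hi hxi
    linarith
  have hx0 : Tendsto x l (𝓝 0) := by
    refine squeeze_zero_norm' ?_ (by simpa using ((hw.mul ht).abs.const_mul (2 / a)) :
      Tendsto (fun i => 2 / a * |w i * t i|) l (𝓝 0))
    filter_upwards [hgap, hx] with i hg hxi
    have hprod : |w i * t i| = |x i| * (2 * u i - x i) := by
      rw [show w i * t i = x i * (2 * u i - x i) by linear_combination hxi, abs_mul,
        abs_of_pos (by linarith : 0 < 2 * u i - x i)]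
    rw [Real.norm_eq_abs, hprod, div_mul_eq_mul_div, le_div_iff₀ ha]
    nlinarith [abs_nonneg (x i)]
  have hlim : Tendsto (fun i => w i / (2 * u i - x i)) l (𝓝 (b / (2 * a))) := by
    have h := hw.div ((hu.const_mul 2).sub hx0) (by rw [sub_zero]; positivity)
    rwa [sub_zero] at h
  refine hlim.congr' ?_
  filter_upwards [hgap, ht0, hx] with i hg hti hxi
  rw [div_eq_div_iff (by linarith) hti]
  linear_combination hxi

theorem tendsto_of_large_root {s : α → ℝ} {m : ℝ} (hm : 0 < m) (hu : Tendsto u l (𝓝 a))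
    (hs : Tendsto s l (𝓝 0)) (hxm : ∀ᶠ i in l, m ≤ x i)
    (hx : ∀ᶠ i in l, x i ^ 2 - 2 * u i * x i + s i = 0) :
    Tendsto x l (𝓝 (2 * a)) := by
  have hsx : Tendsto (fun i => s i / x i) l (𝓝 0) := by
    refine squeeze_zero_norm' ?_ (by simpa using hs.abs.div_const m)
    filter_upwards [hxm] with i hxi
    rw [norm_div, Real.norm_eq_abs, Real.norm_eq_abs, abs_of_pos (hm.trans_le hxi)]
    exact div_le_div_of_nonneg_left (abs_nonneg _) hm hxi
  refine (by simpa using (hu.const_mul 2).sub hsx :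
    Tendsto (fun i => 2 * u i - s i / x i) l _).congr' ?_
  filter_upwards [hxm, hx] with i hxi hxe
  have : x i ≠ 0 := (hm.trans_le hxi).ne'
  field_simp
  linear_combination -hxe

end QuadraticRoots

/-- `R (R - 2Ψ₁(r, R))` for the charged mass function `Ψ₁ = Ψ - Q²/(2R)`. -/
def horizonDefect (Ψ : ℝ → ℝ → ℝ) (Q : ℝ → ℝ) (r R : ℝ) : ℝ :=
  R ^ 2 - 2 * Ψ r R * R + Q r ^ 2

theorem eventually_rescaled_horizon_eq {Ψ : ℝ → ℝ → ℝ} {Q Rh : ℝ → ℝ} (p : ℝ)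
    (hRh : ∀ᶠ r in 𝓝[>] 0, horizonDefect Ψ Q r (Rh r) = 0) :
    ∀ᶠ r in 𝓝[>] (0:ℝ), (Rh r / r^3) ^ 2 - 2 * (Ψ r (Rh r) / r^3) * (Rh r / r^3)
      + (Q r / r ^ (2+p)) ^ 2 * r ^ (2*p-2) = 0 := by
  filter_upwards [hRh, self_mem_nhdsWithin] with r h hr
  have hr3 : r ^ 3 ≠ 0 := (pow_pos hr 3).ne'
  calc _ = horizonDefect Ψ Q r (Rh r) / r ^ 6 := by
        rw [horizonDefect, add_div, ← sq_div_pow_six hr]; field_simp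
    _ = 0 := by rw [h, zero_div]

theorem abs_cubic_tail_le {ψ21 ψ12 ψ03 r R : ℝ} (hR : 0 ≤ R) (hRr : R ≤ r) :
    |ψ21*r^2*R + ψ12*r*R^2 + ψ03*R^3| ≤ (|ψ21| + |ψ12| + |ψ03|) * (r^2 * R) := by
  have hr : 0 ≤ r := hR.trans hRr
  have h12 : r * R^2 ≤ r^2 * R := by
    nlinarith [mul_le_mul_of_nonneg_left hRr (mul_nonneg hr hR)]
  have h03 : R^3 ≤ r^2 * R := by
    nlinarith [mul_le_mul_of_nonneg_left (mul_self_le_mul_self hR hRr) hR]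
  calc _ ≤ |ψ21*r^2*R| + |ψ12*r*R^2| + |ψ03*R^3| := abs_add_three _ _ _
    _ = |ψ21| * (r^2*R) + |ψ12| * (r*R^2) + |ψ03| * R^3 := by
      simp only [abs_mul, abs_pow, abs_of_nonneg hr, abs_of_nonneg hR]; ring
    _ ≤ _ := by
      nlinarith [mul_le_mul_of_nonneg_left h12 (abs_nonneg ψ12),
        mul_le_mul_of_nonneg_left h03 (abs_nonneg ψ03)]

def HasCubicExpansion (Ψ : ℝ → ℝ → ℝ) (ψ30 ψ21 ψ12 ψ03 : ℝ) : Prop :=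
  (fun q : ℝ × ℝ =>
      Ψ q.1 q.2 - (ψ30*q.1^3 + ψ21*q.1^2*q.2 + ψ12*q.1*q.2^2 + ψ03*q.2^3))
    =o[𝓝 ((0:ℝ), (0:ℝ))] fun q : ℝ × ℝ => (|q.1| + |q.2|)^3

namespace HasCubicExpansion

variable {Ψ : ℝ → ℝ → ℝ} {Q Rh : ℝ → ℝ} {ψ30 ψ21 ψ12 ψ03 q0 p : ℝ}

theorem eventually_abs_sub_le (hΨ : HasCubicExpansion Ψ ψ30 ψ21 ψ12 ψ03) (C : ℝ) {c : ℝ}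
    (hc : 0 < c) :
    ∀ᶠ r in 𝓝[>] (0:ℝ), ∀ R, 0 ≤ R → R ≤ C * r^3 → |Ψ r R - ψ30 * r^3| ≤ c * r^3 := by
  set M := |ψ21| + |ψ12| + |ψ03|
  obtain ⟨δ, hδ, hball⟩ :=
    Metric.eventually_nhds_iff.mp (hΨ.def (by positivity : 0 < c / 16))
  filter_upwards [Ioo_mem_nhdsGT hδ, eventually_mul_sq_lt C one_pos,
    eventually_mul_sq_lt (M * C) (half_pos hc)]
    with r ⟨hr, hrδ⟩ hCr hMCr R hR hRC
  have hRr : R ≤ r := by nlinarith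
  have hdist : dist (r, R) ((0:ℝ), (0:ℝ)) < δ := by
    simp only [Prod.dist_eq, Real.dist_eq, sub_zero, abs_of_pos hr,
      abs_of_nonneg hR]
    exact max_lt hrδ (hRr.trans_lt hrδ)
  have hTaylor := hball hdist
  simp only [Real.norm_eq_abs, abs_of_pos hr, abs_of_nonneg hR] at hTaylor
  have hcube : |(r + R)^3| ≤ 8 * r^3 := by
    rw [abs_of_nonneg (by positivity)]
    nlinarith [pow_le_pow_left₀ (by positivity) (by linarith : r + R ≤ 2 * r) 3]
  have htail : |ψ21*r^2*R + ψ12*r*R^2 + ψ03*R^3| ≤ (M * C * r^2) * r^3 := by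
    refine (abs_cubic_tail_le hR hRr).trans ?_
    have hM : 0 ≤ M := by positivity
    nlinarith [mul_le_mul_of_nonneg_left hRC (mul_nonneg hM (sq_nonneg r))]
  calc |Ψ r R - ψ30 * r^3|
      = |(Ψ r R - (ψ30*r^3 + ψ21*r^2*R + ψ12*r*R^2 + ψ03*R^3))
          + (ψ21*r^2*R + ψ12*r*R^2 + ψ03*R^3)| := by ring_nf
    _ ≤ c / 16 * (8 * r^3) + (M * C * r^2) * r^3 :=
      (abs_add_le _ _).trans (add_le_add (hTaylor.trans (by gcongr)) htail)
    _ ≤ c * r^3 := by nlinarith [pow_pos hr 3]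

theorem tendsto_div_cube (hΨ : HasCubicExpansion Ψ ψ30 ψ21 ψ12 ψ03) {Y : ℝ → ℝ} {C : ℝ}
    (hY : ∀ᶠ r in 𝓝[>] 0, 0 ≤ Y r ∧ Y r ≤ C * r^3) :
    Tendsto (fun r => Ψ r (Y r) / r^3) (𝓝[>] 0) (𝓝 ψ30) := by
  refine Metric.tendsto_nhds.mpr fun ε hε => ?_
  filter_upwards [hΨ.eventually_abs_sub_le C (half_pos hε), hY, self_mem_nhdsWithin]
    with r hΨr hYr hr
  have hr3 : (0:ℝ) < r^3 := pow_pos hr 3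
  rw [Real.dist_eq, show Ψ r (Y r) / r^3 - ψ30 = (Ψ r (Y r) - ψ30 * r^3) / r^3 by
      rw [sub_div, mul_div_cancel_right₀ _ hr3.ne'],
    abs_div, abs_of_pos hr3, div_lt_iff₀ hr3]
  linarith [hΨr _ hYr.1 hYr.2, mul_pos hε hr3]

theorem eventually_exists_horizons (hΨ : HasCubicExpansion Ψ ψ30 ψ21 ψ12 ψ03)
    (hψ30 : 0 < ψ30) (hΨc : ∀ r, Continuous (Ψ r)) (hQ0 : ∀ᶠ r in 𝓝[>] 0, Q r ≠ 0)
    (hQ : Tendsto (fun r => Q r ^ 2 / r ^ 6) (𝓝[>] 0) (𝓝 0)) :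
    ∀ᶠ r in 𝓝[>] (0:ℝ), (∃ R ∈ Ioo 0 (ψ30 * r^3), horizonDefect Ψ Q r R = 0) ∧
      ∃ R ∈ Ioo (ψ30 * r^3) (4 * ψ30 * r^3), horizonDefect Ψ Q r R = 0 := by
  filter_upwards [hΨ.eventually_abs_sub_le (4 * ψ30) (by positivity : 0 < ψ30 / 4), hQ0,
    hQ.eventually_lt_const (by positivity : (0:ℝ) < ψ30 ^ 2 / 2), self_mem_nhdsWithin]
    with r hΨr hQr hQsmall hr
  have hr3 : (0:ℝ) < r ^ 3 := pow_pos hr 3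
  have hcont : Continuous (horizonDefect Ψ Q r) := by
    unfold horizonDefect; have := hΨc r; fun_prop
  have hzero : 0 < horizonDefect Ψ Q r 0 := by
    simpa [horizonDefect] using sq_pos_of_ne_zero hQr
  have hmid : horizonDefect Ψ Q r (ψ30 * r^3) < 0 := by
    have hΨm := (abs_le.mp (hΨr (ψ30 * r^3) (mul_pos hψ30 hr3).le (by nlinarith))).1
    rw [div_lt_iff₀ (pow_pos hr 6)] at hQsmall
    unfold horizonDefect
    nlinarith [mul_pos hψ30 hr3]
  have htop : 0 < horizonDefect Ψ Q r (4 * ψ30 * r^3) := by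
    have hΨm := (abs_le.mp (hΨr (4 * ψ30 * r^3) (by nlinarith) le_rfl)).2
    unfold horizonDefect
    nlinarith [mul_pos hψ30 hr3, sq_nonneg (Q r)]
  exact ⟨intermediate_value_Ioo' (mul_pos hψ30 hr3).le hcont.continuousOn ⟨hmid, hzero⟩,
    intermediate_value_Ioo (by nlinarith) hcont.continuousOn ⟨hmid, htop⟩⟩

theorem tendsto_small_horizon (hΨ : HasCubicExpansion Ψ ψ30 ψ21 ψ12 ψ03) (hψ30 : 0 < ψ30)
    (hp : 1 < p) (hQ : Tendsto (fun r => Q r / r ^ (2+p)) (𝓝[>] 0) (𝓝 q0))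
    (hRh : ∀ᶠ r in 𝓝[>] 0, Rh r ∈ Ioo 0 (ψ30 * r^3) ∧ horizonDefect Ψ Q r (Rh r) = 0) :
    Tendsto (fun r => Rh r / r ^ (2*p+1)) (𝓝[>] 0) (𝓝 (q0 ^ 2 / (2 * ψ30))) := by
  have hu := hΨ.tendsto_div_cube (hRh.mono fun r h => ⟨h.1.1.le, h.1.2.le⟩)
  have hx : ∀ᶠ r in 𝓝[>] (0:ℝ), Rh r / r^3 ≤ ψ30 := by
    filter_upwards [hRh, self_mem_nhdsWithin] with r h hr
    exact (div_le_iff₀ (pow_pos hr 3)).mpr h.1.2.le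
  have ht0 : ∀ᶠ r in 𝓝[>] (0:ℝ), r ^ (2*p-2) ≠ 0 := by
    filter_upwards [self_mem_nhdsWithin] with r hr using (Real.rpow_pos_of_pos hr _).ne'
  refine (tendsto_div_of_small_root hψ30 hu (hQ.pow 2)
    (tendsto_rpow_nhdsGT_zero_of_pos (by linarith)) ht0 hx
    (eventually_rescaled_horizon_eq p (hRh.mono fun r h => h.2))).congr' ?_
  filter_upwards [self_mem_nhdsWithin] with r hr
  rw [div_div, ← Real.rpow_natCast, ← Real.rpow_add hr]
  congr 2
  push_cast
  ring

theorem tendsto_large_horizon (hΨ : HasCubicExpansion Ψ ψ30 ψ21 ψ12 ψ03) (hψ30 : 0 < ψ30)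
    (hp : 1 < p) (hQ : Tendsto (fun r => Q r / r ^ (2+p)) (𝓝[>] 0) (𝓝 q0))
    (hRh : ∀ᶠ r in 𝓝[>] 0,
      Rh r ∈ Ioo (ψ30 * r^3) (4 * ψ30 * r^3) ∧ horizonDefect Ψ Q r (Rh r) = 0) :
    Tendsto (fun r => Rh r / r ^ 3) (𝓝[>] 0) (𝓝 (2 * ψ30)) := by
  have hY : ∀ᶠ r in 𝓝[>] (0:ℝ), 0 ≤ Rh r ∧ Rh r ≤ 4 * ψ30 * r^3 := by
    filter_upwards [hRh, self_mem_nhdsWithin] with r h hr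
    exact ⟨(mul_pos hψ30 (pow_pos hr 3)).le.trans h.1.1.le, h.1.2.le⟩
  have hx : ∀ᶠ r in 𝓝[>] (0:ℝ), ψ30 ≤ Rh r / r^3 := by
    filter_upwards [hRh, self_mem_nhdsWithin] with r h hr
    exact (le_div_iff₀ (pow_pos hr 3)).mpr h.1.1.le
  exact tendsto_of_large_root hψ30 (hΨ.tendsto_div_cube hY)
    (by simpa using (hQ.pow 2).mul (tendsto_rpow_nhdsGT_zero_of_pos (by linarith : 0 < 2*p-2)))
    hx (eventually_rescaled_horizon_eq p (hRh.mono fun r h => h.2))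

end HasCubicExpansion

/-- Case `p > 1`: two apparent-horizon branches `R_{h1} < R_{h2}` solving
`R² - 2Ψ(r,R)R + Q(r)² = 0`, with `R_{h1}(r) ~ (q₀²/(2ψ₃₀))r^{2p+1}` and
`R_{h2}(r) ~ 2ψ₃₀ r³` as `r → 0⁺`. -/
theorem horizons_p_gt_one
    (Ψ : ℝ → ℝ → ℝ) (Q : ℝ → ℝ) (ψ30 ψ21 ψ12 ψ03 q0 p : ℝ)
    (hψ30 : 0 < ψ30) (hq0 : q0 ≠ 0) (hp : 1 < p)
    (hΨcont : Continuous (fun q : ℝ × ℝ => Ψ q.1 q.2))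
    (hΨ : (fun q : ℝ × ℝ =>
        Ψ q.1 q.2 - (ψ30*q.1^3 + ψ21*q.1^2*q.2 + ψ12*q.1*q.2^2 + ψ03*q.2^3))
      =o[nhds ((0:ℝ), (0:ℝ))] fun q : ℝ × ℝ => (|q.1| + |q.2|)^3)
    (hQ : (fun r : ℝ => Q r - q0 * r ^ (2+p)) =o[𝓝[>] (0:ℝ)] fun r : ℝ => r ^ (2+p)) :
    ∃ ε > 0, ∃ Rh1 Rh2 : ℝ → ℝ,
      (∀ r ∈ Set.Ioo (0:ℝ) ε,
        0 < Rh1 r ∧ Rh1 r < Rh2 r ∧ Rh2 r ≤ r ∧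
        (Rh1 r)^2 - 2 * Ψ r (Rh1 r) * Rh1 r + (Q r)^2 = 0 ∧
        (Rh2 r)^2 - 2 * Ψ r (Rh2 r) * Rh2 r + (Q r)^2 = 0) ∧
      Tendsto (fun r : ℝ => Rh1 r / r ^ (2*p+1)) (𝓝[>] (0:ℝ)) (𝓝 (q0^2 / (2*ψ30))) ∧
      Tendsto (fun r : ℝ => Rh2 r / r^3) (𝓝[>] (0:ℝ)) (𝓝 (2*ψ30)) := by
  have hΨ' : HasCubicExpansion Ψ ψ30 ψ21 ψ12 ψ03 := hΨ
  have hQlim : Tendsto (fun r => Q r / r ^ (2+p)) (𝓝[>] 0) (𝓝 q0) :=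
    tendsto_div_of_isLittleO_sub hQ <| eventually_mem_nhdsWithin.mono fun r hr =>
      (Real.rpow_pos_of_pos hr _).ne'
  have hQ0 : ∀ᶠ r in 𝓝[>] 0, Q r ≠ 0 :=
    (hQlim.eventually_ne hq0).mono fun r h hQr => h (by rw [hQr, zero_div])
  have hroots := hΨ'.eventually_exists_horizons hψ30
    (fun r => hΨcont.comp (Continuous.prodMk_right r)) hQ0 (tendsto_sq_div_pow_six hp hQlim)
  obtain ⟨Rh1, h1⟩ := (hroots.mono fun _ h => h.1).choice
  obtain ⟨Rh2, h2⟩ := (hroots.mono fun _ h => h.2).choice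
  obtain ⟨ε, hε, hsub⟩ := mem_nhdsGT_iff_exists_Ioo_subset.mp
    ((h1.and h2).and (eventually_mul_sq_lt (4 * ψ30) one_pos))
  refine ⟨ε, hε, Rh1, Rh2, fun r hr => ?_, hΨ'.tendsto_small_horizon hψ30 hp hQlim h1,
    hΨ'.tendsto_large_horizon hψ30 hp hQlim h2⟩
  obtain ⟨⟨⟨⟨h1pos, h1lt⟩, h1eq⟩, ⟨⟨h2gt, h2lt⟩, h2eq⟩⟩, hsmall⟩ := hsub hr
  refine ⟨h1pos, h1lt.trans h2gt, h2lt.le.trans ?_, h1eq, h2eq⟩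
  nlinarith [hr.1]
end

section
/- Assume Ψ(r,R) = ψ₃₀r³ + ψ₂₁r²R + ψ₁₂rR² + ψ₀₃R³ + o((|r|+|R|)³) as (r,R)→(0,0) with Ψ continuous, and Q(r) = q₀r³ + o(r³) as r→0⁺, with 0 < |q₀| < ψ₃₀. Then there exist ε > 0 and functions R_{h1}, R_{h2} : (0,ε) → ℝ with 0 < R_{h1}(r) < R_{h2}(r) ≤ r, such that for i = 1,2 and all r ∈ (0,ε), R_{hi}(r)² − 2Ψ(r,R_{hi}(r))·R_{hi}(r) + Q(r)² = 0, and moreover lim_{r→0⁺} R_{h1}(r)/r³ = ψ₃₀ − √(ψ₃₀² − q₀²) and lim_{r→0⁺} R_{h2}(r)/r³ = ψ₃₀ + √(ψ₃₀² − q₀²). -/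
/-!
Put `R = c r³`. Since `R = o(r)`, only the term `ψ₃₀ r³` of `Ψ` survives, so
`(R² - 2ΨR + Q²) / r⁶` converges, uniformly for `c` in a compact interval, to
`c² - 2ψ₃₀c + q₀² = (c - c₋)(c - c₊)` with `c∓ = ψ₃₀ ∓ √(ψ₃₀² - q₀²)`, and `0 < c₋ < c₊`
because `0 < |q₀| < ψ₃₀`. The limit is positive, negative, positive at three points separating
`c₋` and `c₊`, so for small `r` the intermediate value theorem gives zeros `c₁(r) < c₂(r)` of the
rescaled function near `c₋` and `c₊`; as one factor of the limit stays away from zero on each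
side, `c₁(r) → c₋` and `c₂(r) → c₊`. The horizons are `R_{hi}(r) = cᵢ(r) r³`.
-/

open Filter Topology Asymptotics

theorem isLittleO_sub_leadingTerm {α : Type*} {l : Filter α} {Ψ : ℝ → ℝ → ℝ}
    {ψ30 ψ21 ψ12 ψ03 : ℝ}
    (hΨ : (fun q : ℝ × ℝ =>
        Ψ q.1 q.2 - (ψ30*q.1^3 + ψ21*q.1^2*q.2 + ψ12*q.1*q.2^2 + ψ03*q.2^3))
      =o[𝓝 ((0:ℝ), (0:ℝ))] fun q : ℝ × ℝ => (|q.1| + |q.2|)^3)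
    {r R : α → ℝ} (hr : Tendsto r l (𝓝 0)) (hR : R =o[l] r) :
    (fun x => Ψ (r x) (R x) - ψ30 * r x ^ 3) =o[l] fun x => r x ^ 3 := by
  have hrR : Tendsto (fun x => (r x, R x)) l (𝓝 (0, 0)) :=
    hr.prodMk_nhds (hR.trans_tendsto hr)
  have hsum : (fun x => (|r x| + |R x|) ^ 3) =O[l] fun x => r x ^ 3 :=
    ((isBigO_abs_left.2 (isBigO_refl r l)).add
      (isBigO_abs_left.2 hR.isBigO)).pow 3
  have hremainder := (hΨ.comp_tendsto hrR).trans_isBigO hsum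
  have hmixed : (fun x => ψ21 * r x ^ 2 * R x + ψ12 * r x * R x ^ 2 + ψ03 * R x ^ 3)
      =o[l] fun x => r x ^ 3 := by
    have h1 : (fun x => r x ^ 2 * R x) =o[l] fun x => r x ^ 3 :=
      ((isBigO_refl _ l).mul_isLittleO hR).congr_right fun x => by ring
    have h2 : (fun x => r x * R x ^ 2) =o[l] fun x => r x ^ 3 :=
      ((isBigO_refl _ l).mul_isLittleO (hR.pow two_pos)).congr_right fun x => by ring
    have h3 : (fun x => R x ^ 3) =o[l] fun x => r x ^ 3 := hR.pow three_pos
    exact (((h1.const_mul_left ψ21).add (h2.const_mul_left ψ12)).add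
      (h3.const_mul_left ψ03)).congr_left fun x => by ring
  exact (hremainder.add hmixed).congr_left fun x => by simp only [Function.comp_apply]; ring

theorem Asymptotics.IsLittleO.sq_sub_sq {α 𝕜 : Type*} [NormedField 𝕜] {l : Filter α}
    {f g : α → 𝕜} {a : 𝕜}
    (h : (fun x => f x - a * g x) =o[l] g) :
    (fun x => f x ^ 2 - a ^ 2 * g x ^ 2) =o[l] fun x => g x ^ 2 := by
  have hsum : (fun x => f x + a * g x) =O[l] g :=
    (h.isBigO.add ((isBigO_refl g l).const_mul_left (2 * a))).congr_left fun x => by ring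
  exact (h.mul_isBigO hsum).congr (fun x => by ring) (fun x => by ring)

/-- `R (R - 2Ψ₁(r, R))` for the charged mass function `Ψ₁ = Ψ - Q² / (2R)`. -/
noncomputable def horizonFn (Ψ : ℝ → ℝ → ℝ) (Q : ℝ → ℝ) (r R : ℝ) : ℝ :=
  R ^ 2 - 2 * Ψ r R * R + Q r ^ 2

noncomputable def rescaledHorizonFn (Ψ : ℝ → ℝ → ℝ) (Q : ℝ → ℝ) (r c : ℝ) : ℝ :=
  horizonFn Ψ Q r (c * r ^ 3) / r ^ 6

theorem tendstoUniformlyOn_rescaledHorizonFn {Ψ : ℝ → ℝ → ℝ} {Q : ℝ → ℝ}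
    {ψ30 ψ21 ψ12 ψ03 q0 : ℝ}
    (hΨ : (fun q : ℝ × ℝ =>
        Ψ q.1 q.2 - (ψ30*q.1^3 + ψ21*q.1^2*q.2 + ψ12*q.1*q.2^2 + ψ03*q.2^3))
      =o[𝓝 ((0:ℝ), (0:ℝ))] fun q : ℝ × ℝ => (|q.1| + |q.2|)^3)
    (hQ : (fun r : ℝ => Q r - q0 * r^3) =o[𝓝[>] (0:ℝ)] fun r : ℝ => r^3)
    {K : Set ℝ} (hK : Bornology.IsBounded K) :
    TendstoUniformlyOn (rescaledHorizonFn Ψ Q) (fun c => c ^ 2 - 2 * ψ30 * c + q0 ^ 2)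
      (𝓝[>] 0) K := by
  set L := 𝓝[>] (0:ℝ) ×ˢ 𝓟 K
  obtain ⟨M, hM⟩ := isBounded_iff_forall_norm_le.1 hK
  have hc : (fun p : ℝ × ℝ => p.2) =O[L] fun _ => (1 : ℝ) :=
    IsBigO.of_bound M <| ((eventually_principal.2 hM).prod_inr _).mono fun p hp => by
      simpa using hp
  have hr : Tendsto (fun p : ℝ × ℝ => p.1) L (𝓝 0) := tendsto_fst.mono_right nhdsWithin_le_nhds
  have hR : (fun p : ℝ × ℝ => p.2 * p.1 ^ 3) =o[L] fun p => p.1 :=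
    (hc.mul_isLittleO ((isLittleO_pow_pow (by norm_num : 1 < 3)).comp_tendsto hr)).congr
      (fun p => rfl) (fun p => by simp only [one_mul, pow_one, Function.comp_apply])
  have hΨpart := isLittleO_sub_leadingTerm hΨ hr hR
  have hQpart := hQ.sq_sub_sq.comp_tendsto (tendsto_fst (g := 𝓟 K))
  -- `horizonFn Ψ Q r (c r³) - g(c) r⁶ = -2 c r³ (Ψ(r, c r³) - ψ₃₀ r³) + (Q(r)² - q₀² r⁶)`
  have hdiff : (fun p : ℝ × ℝ => horizonFn Ψ Q p.1 (p.2 * p.1 ^ 3)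
      - (p.2 ^ 2 - 2 * ψ30 * p.2 + q0 ^ 2) * p.1 ^ 6) =o[L] fun p => p.1 ^ 6 :=
    ((((hc.mul (isBigO_refl (fun p : ℝ × ℝ => p.1 ^ 3) L)).const_mul_left (-2)).mul_isLittleO
      hΨpart).add hQpart).congr (fun p => by simp only [Function.comp_apply, horizonFn]; ring)
      (fun p => by simp only [one_mul]; ring)
  rw [tendstoUniformlyOn_iff_tendsto, uniformity_eq_comap_nhds_zero, tendsto_comap_iff]
  refine hdiff.tendsto_div_nhds_zero.congr' ?_
  filter_upwards [eventually_mem_nhdsWithin.prod_inl _] with p hp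
  simp only [Function.comp_apply, rescaledHorizonFn]
  rw [sub_div, mul_div_cancel_right₀ _ (pow_pos (Set.mem_Ioi.1 hp) 6).ne']

/-- A zero of `f` in `[x, y]` if there is one, an arbitrary number otherwise. -/
noncomputable def rootIn (f : ℝ → ℝ) (x y : ℝ) : ℝ :=
  Classical.epsilon fun c => c ∈ Set.Icc x y ∧ f c = 0

theorem rootIn_spec {f : ℝ → ℝ} {x y : ℝ} (hxy : x ≤ y) (hf : ContinuousOn f (Set.Icc x y))
    (h0 : 0 ∈ Set.uIcc (f x) (f y)) : rootIn f x y ∈ Set.Icc x y ∧ f (rootIn f x y) = 0 := by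
  rw [← Set.uIcc_of_le hxy] at hf
  obtain ⟨c, hc, hfc⟩ := intermediate_value_uIcc hf h0
  rw [Set.uIcc_of_le hxy] at hc
  exact Classical.epsilon_spec (p := fun c => c ∈ Set.Icc x y ∧ f c = 0) ⟨c, hc, hfc⟩

theorem rootIn_spec_of_sign_changes {f : ℝ → ℝ} {x y z : ℝ} (hxy : x ≤ y) (hyz : y ≤ z)
    (hf : ContinuousOn f (Set.Icc x z)) (hx : 0 < f x) (hy : f y < 0) (hz : 0 < f z) :
    (rootIn f x y ∈ Set.Icc x y ∧ f (rootIn f x y) = 0) ∧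
      (rootIn f y z ∈ Set.Ioc y z ∧ f (rootIn f y z) = 0) := by
  obtain ⟨hmem₁, hroot₁⟩ := rootIn_spec hxy (hf.mono (Set.Icc_subset_Icc_right hyz))
    (Set.mem_uIcc.2 (Or.inr ⟨hy.le, hx.le⟩))
  obtain ⟨hmem₂, hroot₂⟩ := rootIn_spec hyz (hf.mono (Set.Icc_subset_Icc_left hxy))
    (Set.mem_uIcc.2 (Or.inl ⟨hy.le, hz.le⟩))
  exact ⟨⟨hmem₁, hroot₁⟩, ⟨hmem₂.1.lt_of_ne fun hyr => hy.ne (hyr ▸ hroot₂), hmem₂.2⟩, hroot₂⟩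

theorem TendstoUniformlyOn.tendsto_comp_of_eventually_eq {ι α β : Type*} [UniformSpace β]
    {F : ι → α → β} {f : α → β} {l : Filter ι} {s : Set α} (h : TendstoUniformlyOn F f l s)
    {c : ι → α} {y : β} (hc : ∀ᶠ i in l, c i ∈ s ∧ F i (c i) = y) :
    Tendsto (fun i => f (c i)) l (𝓝 y) := by
  have hcs : Tendsto (fun i => (i, c i)) l (l ×ˢ 𝓟 s) :=
    tendsto_id.prodMk (tendsto_principal.2 (hc.mono fun _ hi => hi.1))
  refine Uniform.tendsto_nhds_left.2 <| ((tendstoUniformlyOn_iff_tendsto.1 h).comp hcs).congr' ?_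
  filter_upwards [hc] with i hi
  simp [hi.2]

theorem tendsto_of_tendsto_sub_mul_sub {α : Type*} {l : Filter α} {x : α → ℝ} {a b s : ℝ}
    (hs : 0 < s) (hb : ∀ᶠ i in l, s ≤ |x i - b|)
    (h : Tendsto (fun i => (x i - a) * (x i - b)) l (𝓝 0)) : Tendsto x l (𝓝 a) := by
  rw [tendsto_iff_norm_sub_tendsto_zero]
  refine squeeze_zero' (Eventually.of_forall fun _ => norm_nonneg _) (hb.mono fun i hi => ?_)
    (by simpa using h.norm.div_const s)
  rw [le_div_iff₀ hs, Real.norm_eq_abs]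
  exact mul_le_mul_of_nonneg_left hi (abs_nonneg _)

theorem eventually_rootIn_spec_of_tendstoUniformlyOn {ι : Type*} {l : Filter ι}
    {G : ι → ℝ → ℝ} {g : ℝ → ℝ} {x y z : ℝ} (hU : TendstoUniformlyOn G g l (Set.Icc x z))
    (hG : ∀ i, ContinuousOn (G i) (Set.Icc x z)) (hxy : x ≤ y) (hyz : y ≤ z)
    (hx : 0 < g x) (hy : g y < 0) (hz : 0 < g z) :
    ∀ᶠ i in l, (rootIn (G i) x y ∈ Set.Icc x y ∧ G i (rootIn (G i) x y) = 0) ∧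
      (rootIn (G i) y z ∈ Set.Ioc y z ∧ G i (rootIn (G i) y z) = 0) := by
  filter_upwards [(hU.tendsto_at ⟨le_rfl, hxy.trans hyz⟩).eventually_const_lt hx,
    (hU.tendsto_at ⟨hxy, hyz⟩).eventually_lt_const hy,
    (hU.tendsto_at ⟨hxy.trans hyz, le_rfl⟩).eventually_const_lt hz] with i hxi hyi hzi
  exact rootIn_spec_of_sign_changes hxy hyz (hG i) hxi hyi hzi

theorem exists_roots_tendsto_of_tendstoUniformlyOn {ι : Type*} {l : Filter ι}
    {G : ι → ℝ → ℝ} {a b x z : ℝ} (hxa : x < a) (hab : a < b) (hbz : b < z)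
    (hG : ∀ i, ContinuousOn (G i) (Set.Icc x z))
    (hU : TendstoUniformlyOn G (fun c => (c - a) * (c - b)) l (Set.Icc x z)) :
    ∃ c₁ c₂ : ι → ℝ,
      (∀ᶠ i in l, x ≤ c₁ i ∧ c₁ i < c₂ i ∧ c₂ i ≤ z ∧ G i (c₁ i) = 0 ∧ G i (c₂ i) = 0) ∧
      Tendsto c₁ l (𝓝 a) ∧ Tendsto c₂ l (𝓝 b) := by
  set y := (a + b) / 2 with hy
  have hay : a < y := by linarith
  have hyb : y < b := by linarith
  have hroots := eventually_rootIn_spec_of_tendstoUniformlyOn hU hG (y := y)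
    (by linarith) (by linarith) (mul_pos_of_neg_of_neg (by linarith) (by linarith))
    (mul_neg_of_pos_of_neg (by linarith) (by linarith)) (mul_pos (by linarith) (by linarith))
  refine ⟨fun i => rootIn (G i) x y, fun i => rootIn (G i) y z,
    hroots.mono fun i h => ⟨h.1.1.1, h.1.1.2.trans_lt h.2.1.1, h.2.1.2, h.1.2, h.2.2⟩, ?_, ?_⟩
  · refine tendsto_of_tendsto_sub_mul_sub (b := b) (s := (b - a) / 2) (by linarith) ?_
      (hU.tendsto_comp_of_eventually_eq
        (hroots.mono fun i h => ⟨⟨h.1.1.1, h.1.1.2.trans (by linarith)⟩, h.1.2⟩))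
    filter_upwards [hroots] with i h
    rw [abs_sub_comm, abs_of_nonneg] <;> linarith [h.1.1.2]
  · have hlim := hU.tendsto_comp_of_eventually_eq
      (hroots.mono fun i h => ⟨⟨by linarith [h.2.1.1], h.2.1.2⟩, h.2.2⟩)
    refine tendsto_of_tendsto_sub_mul_sub (b := a) (s := (b - a) / 2) (by linarith) ?_
      (by simpa only [mul_comm] using hlim)
    filter_upwards [hroots] with i h
    rw [abs_of_nonneg] <;> linarith [h.2.1.1]

theorem continuous_rescaledHorizonFn {Ψ : ℝ → ℝ → ℝ} (hΨ : Continuous fun q : ℝ × ℝ => Ψ q.1 q.2)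
    (Q : ℝ → ℝ) (r : ℝ) : Continuous (rescaledHorizonFn Ψ Q r) := by
  have : Continuous fun c => Ψ r (c * r ^ 3) := hΨ.comp (f := fun c => (r, c * r ^ 3)) (by fun_prop)
  unfold rescaledHorizonFn horizonFn
  fun_prop

theorem rescaledHorizonFn_eq_zero_iff {Ψ : ℝ → ℝ → ℝ} {Q : ℝ → ℝ} {r : ℝ} (hr : r ≠ 0) (c : ℝ) :
    rescaledHorizonFn Ψ Q r c = 0 ↔ horizonFn Ψ Q r (c * r ^ 3) = 0 := by
  simp [rescaledHorizonFn, hr]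

/-- Case `p = 1`, `|q₀| < ψ₃₀`: two apparent-horizon branches solving
`R² - 2Ψ(r,R)R + Q(r)² = 0`, with `R_{hi}(r) ~ (ψ₃₀ ∓ √(ψ₃₀² - q₀²))r³`. -/
theorem horizons_p_eq_one
    (Ψ : ℝ → ℝ → ℝ) (Q : ℝ → ℝ) (ψ30 ψ21 ψ12 ψ03 q0 : ℝ)
    (hq0 : 0 < |q0|) (hlt : |q0| < ψ30)
    (hΨcont : Continuous (fun q : ℝ × ℝ => Ψ q.1 q.2))
    (hΨ : (fun q : ℝ × ℝ =>
        Ψ q.1 q.2 - (ψ30*q.1^3 + ψ21*q.1^2*q.2 + ψ12*q.1*q.2^2 + ψ03*q.2^3))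
      =o[nhds ((0:ℝ), (0:ℝ))] fun q : ℝ × ℝ => (|q.1| + |q.2|)^3)
    (hQ : (fun r : ℝ => Q r - q0 * r^3) =o[𝓝[>] (0:ℝ)] fun r : ℝ => r^3) :
    ∃ ε > 0, ∃ Rh1 Rh2 : ℝ → ℝ,
      (∀ r ∈ Set.Ioo (0:ℝ) ε,
        0 < Rh1 r ∧ Rh1 r < Rh2 r ∧ Rh2 r ≤ r ∧
        (Rh1 r)^2 - 2 * Ψ r (Rh1 r) * Rh1 r + (Q r)^2 = 0 ∧
        (Rh2 r)^2 - 2 * Ψ r (Rh2 r) * Rh2 r + (Q r)^2 = 0) ∧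
      Tendsto (fun r : ℝ => Rh1 r / r^3) (𝓝[>] (0:ℝ))
        (𝓝 (ψ30 - Real.sqrt (ψ30^2 - q0^2))) ∧
      Tendsto (fun r : ℝ => Rh2 r / r^3) (𝓝[>] (0:ℝ))
        (𝓝 (ψ30 + Real.sqrt (ψ30^2 - q0^2))) := by
  have hq : 0 < q0 ^ 2 ∧ q0 ^ 2 < ψ30 ^ 2 := by
    rw [← sq_abs]; exact ⟨pow_pos hq0 2, pow_lt_pow_left₀ hlt hq0.le two_ne_zero⟩
  set s := √(ψ30 ^ 2 - q0 ^ 2)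
  have hs_sq : s ^ 2 = ψ30 ^ 2 - q0 ^ 2 := Real.sq_sqrt (by linarith)
  have hs_pos : 0 < s := Real.sqrt_pos.2 (by linarith)
  have hs_lt : s < ψ30 := by nlinarith
  have hU := tendstoUniformlyOn_rescaledHorizonFn hΨ hQ
    (Metric.isBounded_Icc ((ψ30 - s) / 2) (ψ30 + s + 1))
  rw [show (fun c : ℝ => c ^ 2 - 2 * ψ30 * c + q0 ^ 2) = fun c => (c - (ψ30 - s)) * (c - (ψ30 + s))
    from funext fun c => by linear_combination hs_sq] at hU
  obtain ⟨c₁, c₂, hroots, hc₁, hc₂⟩ := exists_roots_tendsto_of_tendstoUniformlyOn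
    (by linarith) (by linarith) (by linarith)
    (fun r => (continuous_rescaledHorizonFn hΨcont Q r).continuousOn) hU
  have hsmall : Tendsto (fun r : ℝ => (ψ30 + s + 1) * r ^ 2) (𝓝[>] 0) (𝓝 0) :=
    ((by fun_prop : Continuous fun r : ℝ => (ψ30 + s + 1) * r ^ 2).tendsto' 0 0 (by simp)).mono_left
      nhdsWithin_le_nhds
  obtain ⟨ε, hε, hsub⟩ := mem_nhdsGT_iff_exists_Ioo_subset.1
    ((eventually_mem_nhdsWithin.and (hsmall.eventually_le_const one_pos)).and hroots)
  have hcancel : ∀ c : ℝ → ℝ, c =ᶠ[𝓝[>] 0] fun r => c r * r ^ 3 / r ^ 3 := fun c =>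
    eventually_mem_nhdsWithin.mono fun r hr => (mul_div_cancel_right₀ _ (pow_pos hr 3).ne').symm
  refine ⟨ε, hε, fun r => c₁ r * r ^ 3, fun r => c₂ r * r ^ 3, fun r hr => ?_,
    hc₁.congr' (hcancel c₁), hc₂.congr' (hcancel c₂)⟩
  obtain ⟨⟨hr : 0 < r, hr_small⟩, hx₁, h₁₂, h₂z, hroot₁, hroot₂⟩ := hsub hr
  have hr3 : 0 < r ^ 3 := pow_pos hr 3
  refine ⟨mul_pos (by linarith) hr3, mul_lt_mul_of_pos_right h₁₂ hr3, ?_,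
    (rescaledHorizonFn_eq_zero_iff hr.ne' _).1 hroot₁,
    (rescaledHorizonFn_eq_zero_iff hr.ne' _).1 hroot₂⟩
  calc c₂ r * r ^ 3 ≤ (ψ30 + s + 1) * r ^ 3 := mul_le_mul_of_nonneg_right h₂z hr3.le
    _ = (ψ30 + s + 1) * r ^ 2 * r := by ring
    _ ≤ r := mul_le_of_le_one_left hr.le hr_small
end

section
/- Assume Ψ(r,R) = ψ₃₀r³ + ψ₂₁r²R + ψ₁₂rR² + ψ₀₃R³ + o((|r|+|R|)³) as (r,R)→(0,0) with Ψ continuous, and Q(r) = q₀r³ + o(r³) as r→0⁺, with 0 < ψ₃₀ < |q₀|. Then there exists ε > 0 such that for every r ∈ (0,ε) and every R ∈ (0,r], one has R − 2Ψ(r,R) + Q(r)²/R > 0; in particular the apparent-horizon equation R = 2Ψ(r,R) − Q(r)²/R has no solution with 0 < R ≤ r, i.e. no horizon forms. -/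
/-!
For `0 < R ≤ r` near the centre, `Ψ(r, R) ≤ (ψ₃₀ + o(1)) r³ + O(r² R)` and
`|Q(r)| ≥ (|q₀| - o(1)) r³`. If `R ≥ r²`, the term `R` alone beats `2Ψ = O(r³)`.
If `R < r²`, AM–GM gives `R + Q²/R ≥ 2|Q| ≥ 2(|q₀| - o(1)) r³`, which beats
`2Ψ ≤ 2(ψ₃₀ + o(1)) r³ + O(r⁴)` because `|q₀| > ψ₃₀`.
-/

open Filter Topology Asymptotics Set

lemma two_mul_abs_le_add_sq_div {q R : ℝ} (hR : 0 < R) : 2 * |q| ≤ R + q ^ 2 / R := by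
  have hsq : (R - |q|) ^ 2 / R = R + q ^ 2 / R - 2 * |q| := by
    rw [← sq_abs q]
    field_simp
    ring
  linarith [div_nonneg (sq_nonneg (R - |q|)) hR.le]

lemma cubic_tail_le_mul_sq_mul {a b c r R : ℝ} (hR : 0 ≤ R) (hRr : R ≤ r) :
    a * r ^ 2 * R + b * r * R ^ 2 + c * R ^ 3 ≤ (|a| + |b| + |c|) * r ^ 2 * R := by
  have hr : 0 ≤ r := hR.trans hRr
  have hrR2 : r * R ^ 2 ≤ r ^ 2 * R := by
    nlinarith [mul_nonneg (mul_nonneg hr hR) (sub_nonneg.2 hRr)]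
  have hR3 : R ^ 3 ≤ r ^ 2 * R := by
    have : R ^ 2 ≤ r ^ 2 := pow_le_pow_left₀ hR hRr 2
    nlinarith
  have ha : a * (r ^ 2 * R) ≤ |a| * (r ^ 2 * R) :=
    mul_le_mul_of_nonneg_right (le_abs_self a) (by positivity)
  have hb : b * (r * R ^ 2) ≤ |b| * (r ^ 2 * R) :=
    (mul_le_mul_of_nonneg_right (le_abs_self b) (by positivity)).trans
      (mul_le_mul_of_nonneg_left hrR2 (abs_nonneg b))
  have hc : c * R ^ 3 ≤ |c| * (r ^ 2 * R) :=
    (mul_le_mul_of_nonneg_right (le_abs_self c) (by positivity)).trans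
      (mul_le_mul_of_nonneg_left hR3 (abs_nonneg c))
  linarith

lemma le_of_abs_sub_cubic_le {ψ ψ30 ψ21 ψ12 ψ03 δ r R : ℝ} (hR : 0 ≤ R) (hRr : R ≤ r)
    (hδ : 0 ≤ δ)
    (h : |ψ - (ψ30 * r ^ 3 + ψ21 * r ^ 2 * R + ψ12 * r * R ^ 2 + ψ03 * R ^ 3)|
      ≤ δ * (r + R) ^ 3) :
    ψ ≤ (ψ30 + 8 * δ) * r ^ 3 + (|ψ21| + |ψ12| + |ψ03|) * r ^ 2 * R := by
  have hcube : (r + R) ^ 3 ≤ (2 * r) ^ 3 := pow_le_pow_left₀ (by linarith) (by linarith) 3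
  have htail := cubic_tail_le_mul_sq_mul (a := ψ21) (b := ψ12) (c := ψ03) hR hRr
  nlinarith [le_of_abs_le h]

lemma sub_two_mul_add_sq_div_pos {a b K r R ψ q : ℝ} (hr : 0 < r) (hR : 0 < R)
    (ha : 0 ≤ a) (hK : 0 ≤ K) (hψ : ψ ≤ a * r ^ 3 + K * r ^ 2 * R) (hq : b * r ^ 3 ≤ |q|)
    (hab : a + K * r < b) (hsmall : 2 * a * r + 2 * K * r ^ 2 < 1) :
    0 < R - 2 * ψ + q ^ 2 / R := by
  rcases le_or_gt (r ^ 2) R with hlarge | hsmall_R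
  · have hfactor : 0 < 1 - 2 * K * r ^ 2 := by nlinarith
    have : 2 * a * r ^ 3 < r ^ 2 * (1 - 2 * K * r ^ 2) := by nlinarith [pow_pos hr 2]
    nlinarith [div_nonneg (sq_nonneg q) hR.le]
  · have hamgm := two_mul_abs_le_add_sq_div (q := q) hR
    have htail : K * r ^ 2 * R ≤ K * r ^ 4 := by
      have := mul_le_mul_of_nonneg_left hsmall_R.le (mul_nonneg hK (sq_nonneg r))
      nlinarith
    have : (a + K * r) * r ^ 3 < b * r ^ 3 := mul_lt_mul_of_pos_right hab (pow_pos hr 3)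
    nlinarith

lemma eventually_nhdsGT_forall_Ioc_of_eventually_nhds {p : ℝ × ℝ → Prop}
    (h : ∀ᶠ x in 𝓝 ((0 : ℝ), (0 : ℝ)), p x) :
    ∀ᶠ r in 𝓝[>] (0 : ℝ), ∀ R ∈ Ioc 0 r, p (r, R) := by
  obtain ⟨ε, hε, hp⟩ := Metric.eventually_nhds_iff.1 h
  refine mem_nhdsGT_iff_exists_Ioo_subset.2 ⟨ε, hε, fun r hr R hR => hp ?_⟩
  rw [Prod.dist_eq, Real.dist_eq, Real.dist_eq, sub_zero, sub_zero,
    abs_of_pos hr.1, abs_of_pos hR.1]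
  exact max_lt hr.2 (hR.2.trans_lt hr.2)

theorem no_horizon_p_eq_one_general
    (Ψ : ℝ → ℝ → ℝ) (Q : ℝ → ℝ) (ψ30 ψ21 ψ12 ψ03 q0 : ℝ)
    (hψ30 : 0 < ψ30) (hlt : ψ30 < |q0|)
    (hΨ : (fun q : ℝ × ℝ =>
        Ψ q.1 q.2 - (ψ30*q.1^3 + ψ21*q.1^2*q.2 + ψ12*q.1*q.2^2 + ψ03*q.2^3))
      =o[nhds ((0:ℝ), (0:ℝ))] fun q : ℝ × ℝ => (|q.1| + |q.2|)^3)
    (hQ : (fun r : ℝ => Q r - q0 * r^3) =o[𝓝[>] (0:ℝ)] fun r : ℝ => r^3) :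
    ∃ ε > 0, ∀ r ∈ Set.Ioo (0:ℝ) ε, ∀ R : ℝ, 0 < R → R ≤ r →
      0 < R - 2 * Ψ r R + Q r ^ 2 / R ∧ R ≠ 2 * Ψ r R - Q r ^ 2 / R := by
  set δ := (|q0| - ψ30) / 18 with hδ_def
  set K := |ψ21| + |ψ12| + |ψ03|
  have hδ : 0 < δ := div_pos (sub_pos.2 hlt) (by norm_num)
  have hK : 0 ≤ K := by positivity
  have hgap : ∀ᶠ r in 𝓝[>] (0 : ℝ), (ψ30 + 8 * δ) + K * r < |q0| - δ := by
    refine eventually_nhdsWithin_of_eventually_nhds ?_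
    refine ContinuousAt.eventually_lt (by fun_prop) continuousAt_const ?_
    simp only [mul_zero, add_zero]
    linarith
  have hsmall : ∀ᶠ r in 𝓝[>] (0 : ℝ), 2 * (ψ30 + 8 * δ) * r + 2 * K * r ^ 2 < 1 := by
    refine eventually_nhdsWithin_of_eventually_nhds ?_
    exact ContinuousAt.eventually_lt (by fun_prop) continuousAt_const (by norm_num)
  obtain ⟨ε, hε, hsub⟩ := mem_nhdsGT_iff_exists_Ioo_subset.1 <| hgap.and <| hsmall.and <|
    (eventually_nhdsGT_forall_Ioc_of_eventually_nhds (hΨ.def hδ)).and (hQ.def hδ)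
  refine ⟨ε, hε, fun r hr R hR hRr => ?_⟩
  obtain ⟨hab, hlin, hΨr, hQr⟩ := hsub hr
  have hr0 : 0 < r := hr.1
  have hΨR := hΨr R ⟨hR, hRr⟩
  simp only [Real.norm_eq_abs, abs_of_pos hr0, abs_of_pos hR, abs_pow,
    abs_of_pos (add_pos hr0 hR)] at hΨR
  simp only [Real.norm_eq_abs, abs_pow, abs_of_pos hr0] at hQr
  have hQlow : (|q0| - δ) * r ^ 3 ≤ |Q r| := by
    have := abs_sub_abs_le_abs_sub (q0 * r ^ 3) (Q r)
    rw [abs_sub_comm, abs_mul, abs_pow, abs_of_pos hr0] at this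
    linarith
  have key := sub_two_mul_add_sq_div_pos hr0 hR (by positivity) hK
    (le_of_abs_sub_cubic_le hR.le hRr hδ.le hΨR) hQlow hab hlin
  exact ⟨key, fun h => by linarith⟩

/-- Case `p = 1`, `|q₀| > ψ₃₀`: no apparent horizon forms, i.e.
`R - 2Ψ(r,R) + Q(r)²/R > 0` for all small `r > 0` and all `0 < R ≤ r`. -/
theorem no_horizon_p_eq_one
    (Ψ : ℝ → ℝ → ℝ) (Q : ℝ → ℝ) (ψ30 ψ21 ψ12 ψ03 q0 : ℝ)
    (hψ30 : 0 < ψ30) (hlt : ψ30 < |q0|)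
    (hΨcont : Continuous (fun q : ℝ × ℝ => Ψ q.1 q.2))
    (hΨ : (fun q : ℝ × ℝ =>
        Ψ q.1 q.2 - (ψ30*q.1^3 + ψ21*q.1^2*q.2 + ψ12*q.1*q.2^2 + ψ03*q.2^3))
      =o[nhds ((0:ℝ), (0:ℝ))] fun q : ℝ × ℝ => (|q.1| + |q.2|)^3)
    (hQ : (fun r : ℝ => Q r - q0 * r^3) =o[𝓝[>] (0:ℝ)] fun r : ℝ => r^3) :
    ∃ ε > 0, ∀ r ∈ Set.Ioo (0:ℝ) ε, ∀ R : ℝ, 0 < R → R ≤ r →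
      0 < R - 2 * Ψ r R + Q r ^ 2 / R ∧ R ≠ 2 * Ψ r R - Q r ^ 2 / R :=
  no_horizon_p_eq_one_general Ψ Q ψ30 ψ21 ψ12 ψ03 q0 hψ30 hlt hΨ hQ
end

section
/- Assume Ψ(r,R) = ψ₃₀r³ + ψ₂₁r²R + ψ₁₂rR² + ψ₀₃R³ + o((|r|+|R|)³) as (r,R)→(0,0) with Ψ continuous, and Q(r) = q₀r³ + o(r³) as r→0⁺, with 0 < ψ₃₀ < |q₀|. Let Ψ₁(r,R) := Ψ(r,R) − Q(r)²/(2R) and let Y₁ : ℝ×ℝ → ℝ be any function. Then there exists ε > 0 such that for every r ∈ (0,ε) and every R ∈ (0,r] with Y₁(r,R) = 0, one has 2Ψ₁(r,R)/R − 1 + Y₁(r,R)² < 0; i.e. the quantity u₁² := 2Ψ₁/R − 1 + Y₁² is strictly negative everywhere on the would-be shell-crossing set {Y₁ = 0}, so the collapse halts (u₁ vanishes) before any shell-crossing singularity can occur. -/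
/-!
On `{Y₁ = 0}` one has `u₁² = (2ΨR − Q² − R²)/R²`. For `0 < R ≤ r` small, the expansions give
`Ψ ≤ a r³ + C r² R` and `|Q| ≥ b r³` with `0 ≤ a < b` (any constants between `ψ₃₀` and `|q₀|`).
Writing `k = a/b < 1`, AM–GM gives `2 a r³ R ≤ k (b² r⁶ + R²)`, and once `2 C r² ≤ 1 − k`
the numerator is at most `(k − 1) b² r⁶ < 0`.
-/

open Filter Topology Asymptotics

lemma cubic_tail_le {ψ21 ψ12 ψ03 r R : ℝ} (hR : 0 ≤ R) (hRr : R ≤ r) :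
    ψ21 * r ^ 2 * R + ψ12 * r * R ^ 2 + ψ03 * R ^ 3 ≤ (|ψ21| + |ψ12| + |ψ03|) * r ^ 2 * R := by
  have hr : 0 ≤ r := hR.trans hRr
  have h21 : ψ21 * (r ^ 2 * R) ≤ |ψ21| * (r ^ 2 * R) :=
    mul_le_mul_of_nonneg_right (le_abs_self _) (by positivity)
  have h12 : ψ12 * (r * R ^ 2) ≤ |ψ12| * (r ^ 2 * R) :=
    mul_le_mul (le_abs_self _) (by nlinarith [mul_nonneg hr hR]) (by positivity) (abs_nonneg _)
  have h03 : ψ03 * R ^ 3 ≤ |ψ03| * (r ^ 2 * R) :=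
    mul_le_mul (le_abs_self _) (by nlinarith [mul_nonneg hr hR]) (by positivity) (abs_nonneg _)
  linarith

lemma eventually_nhds_zero_forall_abs_le {p : ℝ × ℝ → Prop} (h : ∀ᶠ q in 𝓝 (0, 0), p q) :
    ∀ᶠ r in 𝓝 0, ∀ R, |R| ≤ |r| → p (r, R) := by
  obtain ⟨ε, hε, hp⟩ := Metric.eventually_nhds_iff.1 h
  filter_upwards [Metric.ball_mem_nhds (0 : ℝ) hε] with r hr R hRr
  refine hp ?_
  rw [Metric.mem_ball, Real.dist_0_eq_abs] at hr
  rw [Prod.dist_eq, Real.dist_0_eq_abs, Real.dist_0_eq_abs]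
  exact max_lt hr (hRr.trans_lt hr)

lemma eventually_le_cubic_of_isLittleO {Ψ : ℝ → ℝ → ℝ} {ψ30 ψ21 ψ12 ψ03 δ : ℝ} (hδ : 0 < δ)
    (hΨ : (fun q : ℝ × ℝ =>
        Ψ q.1 q.2 - (ψ30*q.1^3 + ψ21*q.1^2*q.2 + ψ12*q.1*q.2^2 + ψ03*q.2^3))
      =o[𝓝 (0, 0)] fun q : ℝ × ℝ => (|q.1| + |q.2|)^3) :
    ∀ᶠ r in 𝓝[>] 0, ∀ R, 0 < R → R ≤ r →
      Ψ r R ≤ (ψ30 + δ) * r ^ 3 + (|ψ21| + |ψ12| + |ψ03|) * r ^ 2 * R := by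
  have hnear := eventually_nhds_zero_forall_abs_le (hΨ.def (div_pos hδ (by norm_num : (0:ℝ) < 8)))
  filter_upwards [hnear.filter_mono nhdsWithin_le_nhds, self_mem_nhdsWithin]
    with r hr (hr0 : 0 < r) R hR hRr
  have hbound := hr R (by rwa [abs_of_pos hR, abs_of_pos hr0])
  rw [Real.norm_eq_abs, Real.norm_eq_abs, abs_of_pos hR, abs_of_pos hr0,
    abs_of_nonneg (by positivity : (0:ℝ) ≤ (r + R) ^ 3)] at hbound
  have hcube : (r + R) ^ 3 ≤ (2 * r) ^ 3 := pow_le_pow_left₀ (by positivity) (by linarith) 3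
  have htail := cubic_tail_le (ψ21 := ψ21) (ψ12 := ψ12) (ψ03 := ψ03) hR.le hRr
  nlinarith [(abs_le.1 hbound).2]

lemma eventually_le_abs_of_isLittleO {Q : ℝ → ℝ} {q0 δ : ℝ} (hδ : 0 < δ)
    (hQ : (fun r : ℝ => Q r - q0 * r^3) =o[𝓝[>] 0] fun r : ℝ => r^3) :
    ∀ᶠ r in 𝓝[>] 0, (|q0| - δ) * r ^ 3 ≤ |Q r| := by
  filter_upwards [hQ.def hδ, self_mem_nhdsWithin] with r hr (hr0 : 0 < r)
  rw [Real.norm_eq_abs, Real.norm_eq_abs, abs_of_pos (pow_pos hr0 3)] at hr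
  have htri : |q0 * r ^ 3| - |Q r| ≤ |Q r - q0 * r ^ 3| := by
    rw [abs_sub_comm]; exact abs_sub_abs_le_abs_sub _ _
  rw [abs_mul, abs_of_pos (pow_pos hr0 3)] at htri
  linarith

lemma two_mul_mul_sub_sq_sub_sq_neg {ψ q a b c r R : ℝ} (ha : 0 ≤ a) (hab : a < b)
    (hr : 0 < r) (hR : 0 ≤ R) (hψ : ψ ≤ a * r ^ 3 + c * r ^ 2 * R) (hq : b * r ^ 3 ≤ |q|)
    (hc : 2 * c * r ^ 2 ≤ 1 - a / b) :
    2 * ψ * R - q ^ 2 - R ^ 2 < 0 := by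
  have hb : 0 < b := ha.trans_lt hab
  set k := a / b
  have hk0 : 0 ≤ k := div_nonneg ha hb.le
  have hk1 : k < 1 := (div_lt_one hb).2 hab
  have hbr : 0 < b * r ^ 3 := by positivity
  have hamgm : 2 * a * r ^ 3 * R ≤ k * ((b * r ^ 3) ^ 2 + R ^ 2) := by
    have h := mul_le_mul_of_nonneg_left (two_mul_le_add_sq (b * r ^ 3) R) hk0
    rwa [show k * (2 * (b * r ^ 3) * R) = 2 * a * r ^ 3 * R by
      simp only [k]; field_simp] at h
  have hq2 : (b * r ^ 3) ^ 2 ≤ q ^ 2 := by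
    rw [← sq_abs q]; exact pow_le_pow_left₀ hbr.le hq 2
  have hcR : 2 * c * r ^ 2 * R ^ 2 ≤ (1 - k) * R ^ 2 :=
    mul_le_mul_of_nonneg_right hc (sq_nonneg R)
  calc 2 * ψ * R - q ^ 2 - R ^ 2
      ≤ 2 * a * r ^ 3 * R + 2 * c * r ^ 2 * R ^ 2 - (b * r ^ 3) ^ 2 - R ^ 2 := by
        nlinarith [mul_le_mul_of_nonneg_right hψ hR]
    _ ≤ (k - 1) * (b * r ^ 3) ^ 2 := by linarith
    _ < 0 := mul_neg_of_neg_of_pos (by linarith) (by positivity)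

lemma two_mul_sub_div_div_sub_one_neg {ψ q R : ℝ} (hR : 0 < R)
    (h : 2 * ψ * R - q ^ 2 - R ^ 2 < 0) :
    2 * (ψ - q ^ 2 / (2 * R)) / R - 1 < 0 := by
  have heq : 2 * (ψ - q ^ 2 / (2 * R)) / R - 1 = (2 * ψ * R - q ^ 2 - R ^ 2) / R ^ 2 := by
    field_simp
  rw [heq]
  exact div_neg_of_neg_of_pos h (by positivity)

theorem regular_solution_p_eq_one_general
    (Ψ Y₁ : ℝ → ℝ → ℝ) (Q : ℝ → ℝ) (ψ30 ψ21 ψ12 ψ03 q0 : ℝ)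
    (hψ30 : 0 < ψ30) (hlt : ψ30 < |q0|)
    (hΨ : (fun q : ℝ × ℝ =>
        Ψ q.1 q.2 - (ψ30*q.1^3 + ψ21*q.1^2*q.2 + ψ12*q.1*q.2^2 + ψ03*q.2^3))
      =o[nhds ((0:ℝ), (0:ℝ))] fun q : ℝ × ℝ => (|q.1| + |q.2|)^3)
    (hQ : (fun r : ℝ => Q r - q0 * r^3) =o[𝓝[>] (0:ℝ)] fun r : ℝ => r^3) :
    ∃ ε > 0, ∀ r ∈ Set.Ioo (0:ℝ) ε, ∀ R : ℝ, 0 < R → R ≤ r →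
      Y₁ r R = 0 →
      2 * (Ψ r R - Q r ^ 2 / (2 * R)) / R - 1 + (Y₁ r R) ^ 2 < 0 := by
  set δ := (|q0| - ψ30) / 3
  have hδ : 0 < δ := by simp only [δ]; linarith
  have hab : ψ30 + δ < |q0| - δ := by simp only [δ]; linarith
  set C := |ψ21| + |ψ12| + |ψ03|
  have hsmall : ∀ᶠ r in 𝓝 (0:ℝ), 2 * C * r ^ 2 ≤ 1 - (ψ30 + δ) / (|q0| - δ) :=
    (continuous_const.mul (continuous_pow 2)).tendsto' 0 0 (by simp) |>.eventually
      (eventually_le_nhds (sub_pos.2 ((div_lt_one (by linarith)).2 hab)))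
  have hkey : ∀ᶠ r in 𝓝[>] (0:ℝ), ∀ R, 0 < R → R ≤ r → 2 * Ψ r R * R - Q r ^ 2 - R ^ 2 < 0 := by
    filter_upwards [eventually_le_cubic_of_isLittleO hδ hΨ, eventually_le_abs_of_isLittleO hδ hQ,
      hsmall.filter_mono nhdsWithin_le_nhds, self_mem_nhdsWithin] with r hΨr hQr hr hr0 R hR hRr
    exact two_mul_mul_sub_sq_sub_sq_neg (by linarith) hab hr0 hR.le (hΨr R hR hRr) hQr hr
  obtain ⟨ε, hε, hsub⟩ := mem_nhdsGT_iff_exists_Ioo_subset.1 hkey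
  refine ⟨ε, hε, fun r hr R hR hRr hY => ?_⟩
  rw [hY, zero_pow two_ne_zero, add_zero]
  exact two_mul_sub_div_div_sub_one_neg hR (hsub hr R hR hRr)

/-- Case `p = 1`, `|q₀| > ψ₃₀`: on the would-be shell-crossing set `{Y₁ = 0}`
the quantity `u₁² = 2Ψ₁/R − 1 + Y₁²` (with `Ψ₁ = Ψ − Q²/(2R)`) is strictly
negative, so the collapse halts before any shell-crossing singularity occurs. -/
theorem regular_solution_p_eq_one
    (Ψ Y₁ : ℝ → ℝ → ℝ) (Q : ℝ → ℝ) (ψ30 ψ21 ψ12 ψ03 q0 : ℝ)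
    (hψ30 : 0 < ψ30) (hlt : ψ30 < |q0|)
    (hΨcont : Continuous (fun q : ℝ × ℝ => Ψ q.1 q.2))
    (hΨ : (fun q : ℝ × ℝ =>
        Ψ q.1 q.2 - (ψ30*q.1^3 + ψ21*q.1^2*q.2 + ψ12*q.1*q.2^2 + ψ03*q.2^3))
      =o[nhds ((0:ℝ), (0:ℝ))] fun q : ℝ × ℝ => (|q.1| + |q.2|)^3)
    (hQ : (fun r : ℝ => Q r - q0 * r^3) =o[𝓝[>] (0:ℝ)] fun r : ℝ => r^3) :
    ∃ ε > 0, ∀ r ∈ Set.Ioo (0:ℝ) ε, ∀ R : ℝ, 0 < R → R ≤ r →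
      Y₁ r R = 0 →
      2 * (Ψ r R - Q r ^ 2 / (2 * R)) / R - 1 + (Y₁ r R) ^ 2 < 0 :=
  regular_solution_p_eq_one_general Ψ Y₁ Q ψ30 ψ21 ψ12 ψ03 q0 hψ30 hlt hΨ hQ
end

section
/- Let ψ₃₀ > 0 and 0 < |q₀| < ψ₃₀. Let R_{h1}, R_sc, R_{h2} : (0,ε) → ℝ satisfy, as r→0⁺, R_{h1}(r) = (ψ₃₀ − √(ψ₃₀² − q₀²))·r³ + o(r³), R_sc(r) = (q₀²/ψ₃₀)·r³ + o(r³), and R_{h2}(r) = (ψ₃₀ + √(ψ₃₀² − q₀²))·r³ + o(r³). Then there exists δ ∈ (0,ε) such that R_{h1}(r) < R_sc(r) < R_{h2}(r) for all r ∈ (0,δ). -/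
/-!
The three curves are `c r³ + o(r³)` with coefficients `ψ₃₀ ∓ √(ψ₃₀² − q₀²)` and `q₀²/ψ₃₀`.
The two horizon coefficients are the roots of `x² − 2ψ₃₀ x + q₀²`, which at `x = q₀²/ψ₃₀` takes
the negative value `q₀² (q₀² − ψ₃₀²)/ψ₃₀²`, so the shell-crossing coefficient lies strictly
between them.
Strictly ordered leading coefficients of a common positive gauge `r³` order the functions
themselves near `0⁺`.
-/

open Filter Topology Asymptotics

lemma eventually_lt_of_isLittleO_sub_mul {α : Type*} {l : Filter α} {f g φ : α → ℝ}
    {a b : ℝ} (hab : a < b) (hφ : ∀ᶠ x in l, 0 < φ x)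
    (hf : (fun x => f x - a * φ x) =o[l] φ) (hg : (fun x => g x - b * φ x) =o[l] φ) :
    ∀ᶠ x in l, f x < g x := by
  filter_upwards [(hg.sub hf).def (half_pos (sub_pos.2 hab)), hφ] with x hx hφx
  rw [Real.norm_eq_abs, Real.norm_eq_abs, abs_of_pos hφx] at hx
  nlinarith [neg_abs_le (g x - b * φ x - (f x - a * φ x))]

lemma sub_sqrt_sq_sub_lt_div {ψ c : ℝ} (hψ : 0 < ψ) (hc : 0 < c) (hcψ : c < ψ ^ 2) :
    ψ - √(ψ ^ 2 - c) < c / ψ := by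
  have hs : √(ψ ^ 2 - c) ^ 2 = ψ ^ 2 - c := Real.sq_sqrt (by linarith)
  rw [lt_div_iff₀ hψ]
  nlinarith [Real.sqrt_pos.2 (sub_pos.2 hcψ)]

lemma div_lt_add_sqrt_sq_sub {ψ c : ℝ} (hψ : 0 < ψ) (hcψ : c < ψ ^ 2) :
    c / ψ < ψ + √(ψ ^ 2 - c) := by
  rw [div_lt_iff₀ hψ]
  nlinarith [Real.sqrt_nonneg (ψ ^ 2 - c)]

lemma exists_forall_Ioo_of_eventually_nhdsGT {p : ℝ → Prop} {a b : ℝ}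
    (h : ∀ᶠ x in 𝓝[>] a, p x) (hab : a < b) :
    ∃ δ, a < δ ∧ δ < b ∧ ∀ x ∈ Set.Ioo a δ, p x := by
  obtain ⟨u, hau, hu⟩ := mem_nhdsGT_iff_exists_Ioo_subset.1 h
  obtain ⟨δ, haδ, hδ⟩ := exists_between (lt_min hau hab)
  exact ⟨δ, haδ, hδ.trans_le (min_le_right _ _),
    fun x hx => hu ⟨hx.1, hx.2.trans (hδ.trans_le (min_le_left _ _))⟩⟩

/-- For `0 < |q₀| < ψ₃₀` the two apparent-horizon branches bound the
shell-crossing curve, one from below and the other from above: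
`R_{h1}(r) < R_sc(r) < R_{h2}(r)` for small `r > 0`. -/
theorem horizons_bound_shell_crossing
    (ψ30 q0 ε : ℝ) (hq0 : 0 < |q0|) (hlt : |q0| < ψ30) (hε : 0 < ε)
    (Rh1 Rsc Rh2 : ℝ → ℝ)
    (hRh1 : (fun r : ℝ => Rh1 r - (ψ30 - Real.sqrt (ψ30^2 - q0^2)) * r^3)
      =o[𝓝[>] (0:ℝ)] fun r : ℝ => r^3)
    (hRsc : (fun r : ℝ => Rsc r - (q0^2 / ψ30) * r^3)
      =o[𝓝[>] (0:ℝ)] fun r : ℝ => r^3)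
    (hRh2 : (fun r : ℝ => Rh2 r - (ψ30 + Real.sqrt (ψ30^2 - q0^2)) * r^3)
      =o[𝓝[>] (0:ℝ)] fun r : ℝ => r^3) :
    ∃ δ : ℝ, 0 < δ ∧ δ < ε ∧
      ∀ r ∈ Set.Ioo (0:ℝ) δ, Rh1 r < Rsc r ∧ Rsc r < Rh2 r := by
  have hψ : 0 < ψ30 := hq0.trans hlt
  have hq2 : 0 < q0 ^ 2 := by simpa only [sq_abs] using pow_pos hq0 2
  have hq2ψ : q0 ^ 2 < ψ30 ^ 2 := by
    simpa only [sq_abs] using pow_lt_pow_left₀ hlt hq0.le two_ne_zero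
  have hcube : ∀ᶠ r in 𝓝[>] (0:ℝ), 0 < r ^ 3 :=
    eventually_nhdsWithin_of_forall fun r hr => pow_pos hr 3
  have hlower := eventually_lt_of_isLittleO_sub_mul
    (sub_sqrt_sq_sub_lt_div hψ hq2 hq2ψ) hcube hRh1 hRsc
  have hupper := eventually_lt_of_isLittleO_sub_mul
    (div_lt_add_sqrt_sq_sub hψ hq2ψ) hcube hRsc hRh2
  exact exists_forall_Ioo_of_eventually_nhdsGT (hlower.and hupper) hε
end
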